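/- arXiv:2412.20335 — 2 statements merged into one kernel-verified Lean document; each statement's English description precedes it below -/
import Mathlib

section
/- The function H₀(s) := ∫₀^s (2W(ξ))^{−1/2} dξ is well-defined and strictly increasing on (−1,1) and is a bijection from (−1,1) onto ℝ; its inverse g₀ := H₀^{−1} : ℝ → (−1,1) is C², satisfies g₀(0) = 0, g₀'(t) = √(2W(g₀(t))) > 0 for all t ∈ ℝ, g₀''(t) = W'(g₀(t)) for all t ∈ ℝ, and lim_{t→±∞} g₀(t) = ±1. -/
open MeasureTheory Filter Topology Set

noncomputable section

def Wder (W : ℝ → ℝ) : ℝ → ℝ := derivWithin W (Set.Icc (-1) 1)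

structure DoubleWell (W : ℝ → ℝ) : Prop where
  smooth : ContDiffOn ℝ 2 W (Set.Icc (-1) 1)
  zero_neg : W (-1) = 0
  zero_pos : W 1 = 0
  pos : ∀ s ∈ Set.Ioo (-1 : ℝ) 1, 0 < W s
  deriv_neg : Wder W (-1) = 0
  deriv_pos : Wder W 1 = 0
  deriv2_neg : 0 < derivWithin (Wder W) (Set.Icc (-1) 1) (-1)
  deriv2_pos : 0 < derivWithin (Wder W) (Set.Icc (-1) 1) 1

namespace Profile

def FW (W : ℝ → ℝ) (ξ : ℝ) : ℝ := (Real.sqrt (2 * W ξ))⁻¹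
def HI (W : ℝ → ℝ) (s : ℝ) : ℝ := ∫ ξ in (0:ℝ)..s, FW W ξ

variable {W : ℝ → ℝ} (hW : DoubleWell W)

lemma uniqueDiff : UniqueDiffOn ℝ (Icc (-1:ℝ) 1) := uniqueDiffOn_Icc (by norm_num)

lemma zero_mem' : (0:ℝ) ∈ Ioo (-1:ℝ) 1 := by norm_num

include hW

lemma contW : ContinuousOn W (Icc (-1:ℝ) 1) := hW.smooth.continuousOn

lemma contWder : ContinuousOn (Wder W) (Icc (-1:ℝ) 1) :=
  (hW.smooth.derivWithin (m := 1) uniqueDiff (by norm_num)).continuousOn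

lemma contWder2 : ContinuousOn (derivWithin (Wder W) (Icc (-1:ℝ) 1)) (Icc (-1:ℝ) 1) :=
  ((hW.smooth.derivWithin (m := 1) uniqueDiff (by norm_num)).derivWithin (m := 0) uniqueDiff
    (by norm_num)).continuousOn

lemma contAtW {s : ℝ} (hs : s ∈ Ioo (-1:ℝ) 1) : ContinuousAt W s :=
  (contW hW s (Ioo_subset_Icc_self hs)).continuousAt (Icc_mem_nhds hs.1 hs.2)

lemma FW_pos {s : ℝ} (hs : s ∈ Ioo (-1:ℝ) 1) : 0 < FW W s := by
  have := hW.pos s hs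
  have : 0 < Real.sqrt (2 * W s) := Real.sqrt_pos.2 (by linarith)
  exact inv_pos.2 this

lemma contAtFW {s : ℝ} (hs : s ∈ Ioo (-1:ℝ) 1) : ContinuousAt (FW W) s := by
  have hWs := hW.pos s hs
  have h1 : 0 < Real.sqrt (2 * W s) := Real.sqrt_pos.2 (by linarith)
  exact ((Real.continuous_sqrt.continuousAt.comp
    ((continuous_const.continuousAt (x := s)).mul (contAtW hW hs))).inv₀ (ne_of_gt h1))

lemma contOnFW : ContinuousOn (FW W) (Ioo (-1:ℝ) 1) := fun s hs =>
  (contAtFW hW hs).continuousWithinAt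

lemma integrableFW {a b : ℝ} (ha : a ∈ Ioo (-1:ℝ) 1) (hb : b ∈ Ioo (-1:ℝ) 1) :
    IntervalIntegrable (FW W) volume a b := by
  apply ContinuousOn.intervalIntegrable
  apply (contOnFW hW).mono
  exact Set.OrdConnected.uIcc_subset ordConnected_Ioo ha hb

lemma hasDerivAtHI {s : ℝ} (hs : s ∈ Ioo (-1:ℝ) 1) : HasDerivAt (HI W) (FW W s) s := by
  exact intervalIntegral.integral_hasDerivAt_right (integrableFW hW zero_mem' hs)
    ((contOnFW hW).stronglyMeasurableAtFilter isOpen_Ioo s hs) (contAtFW hW hs)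

lemma strictMonoHI : StrictMonoOn (HI W) (Ioo (-1:ℝ) 1) := by
  apply strictMonoOn_of_deriv_pos (convex_Ioo _ _)
  · exact fun s hs => ((hasDerivAtHI hW hs).continuousAt).continuousWithinAt
  · intro s hs
    rw [interior_Ioo] at hs
    rw [(hasDerivAtHI hW hs).deriv]
    exact FW_pos hW hs

end Profile

namespace Profile
variable {W : ℝ → ℝ} (hW : DoubleWell W)
include hW

lemma exists_bound : ∃ C > 0, (∀ s ∈ Icc (-1:ℝ) 1, W s ≤ C * (1 - s)^2) ∧
    (∀ s ∈ Icc (-1:ℝ) 1, W s ≤ C * (1 + s)^2) := by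
  obtain ⟨K, hK⟩ := (isCompact_Icc (a := (-1:ℝ)) (b := 1)).exists_bound_of_continuousOn
    (contWder2 hW)
  set C := max K 1 with hC
  have hC0 : 0 < C := lt_of_lt_of_le one_pos (le_max_right _ _)
  have hKC : ∀ x ∈ Icc (-1:ℝ) 1, ‖derivWithin (Wder W) (Icc (-1:ℝ) 1) x‖ ≤ C :=
    fun x hx => (hK x hx).trans (le_max_left _ _)
  have hWdD : DifferentiableOn ℝ (Wder W) (Icc (-1:ℝ) 1) :=
    (hW.smooth.derivWithin (m := 1) uniqueDiff (by norm_num)).differentiableOn (by norm_num)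
  have hWd : ∀ x ∈ Icc (-1:ℝ) 1,
      HasDerivWithinAt (Wder W) (derivWithin (Wder W) (Icc (-1:ℝ) 1) x) (Icc (-1:ℝ) 1) x :=
    fun x hx => (hWdD x hx).hasDerivWithinAt
  have hWD : ∀ x ∈ Icc (-1:ℝ) 1, HasDerivWithinAt W (Wder W x) (Icc (-1:ℝ) 1) x :=
    fun x hx => ((hW.smooth.differentiableOn (by norm_num)) x hx).hasDerivWithinAt
  -- |W'| ≤ C (1-s) and |W'| ≤ C(1+s)
  have h1 : ∀ s ∈ Icc (-1:ℝ) 1, |Wder W s| ≤ C * (1 - s) := by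
    intro s hs
    have := Convex.norm_image_sub_le_of_norm_hasDerivWithin_le hWd hKC (convex_Icc _ _)
      (by norm_num : (1:ℝ) ∈ Icc (-1:ℝ) 1) hs
    rw [hW.deriv_pos, sub_zero] at this
    calc |Wder W s| ≤ C * ‖s - 1‖ := this
      _ = C * (1 - s) := by rw [Real.norm_eq_abs, abs_sub_comm, abs_of_nonneg (by linarith [hs.2])]
  have h2 : ∀ s ∈ Icc (-1:ℝ) 1, |Wder W s| ≤ C * (1 + s) := by
    intro s hs
    have := Convex.norm_image_sub_le_of_norm_hasDerivWithin_le hWd hKC (convex_Icc _ _)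
      (by norm_num : (-1:ℝ) ∈ Icc (-1:ℝ) 1) hs
    rw [hW.deriv_neg, sub_zero] at this
    calc |Wder W s| ≤ C * ‖s - (-1)‖ := this
      _ = C * (1 + s) := by rw [Real.norm_eq_abs, abs_of_nonneg (by linarith [hs.1])]; ring
  refine ⟨C, hC0, ?_, ?_⟩
  · intro s hs
    have hsub : Icc s 1 ⊆ Icc (-1:ℝ) 1 := Icc_subset_Icc hs.1 le_rfl
    have := Convex.norm_image_sub_le_of_norm_hasDerivWithin_le
      (f := W) (f' := Wder W) (s := Icc s 1) (C := C * (1 - s))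
      (fun x hx => (hWD x (hsub hx)).mono hsub)
      (fun x hx => by
        calc ‖Wder W x‖ ≤ C * (1 - x) := h1 x (hsub hx)
          _ ≤ C * (1 - s) := by nlinarith [hx.1, hC0])
      (convex_Icc _ _) (by exact ⟨hs.2, le_rfl⟩) (left_mem_Icc.2 hs.2)
    rw [hW.zero_pos, sub_zero] at this
    calc W s ≤ |W s| := le_abs_self _
      _ ≤ C * (1 - s) * ‖s - 1‖ := this
      _ = C * (1 - s)^2 := by
          rw [Real.norm_eq_abs, abs_sub_comm, abs_of_nonneg (by linarith [hs.2])]; ring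
  · intro s hs
    have hsub : Icc (-1:ℝ) s ⊆ Icc (-1:ℝ) 1 := Icc_subset_Icc le_rfl hs.2
    have := Convex.norm_image_sub_le_of_norm_hasDerivWithin_le
      (f := W) (f' := Wder W) (s := Icc (-1:ℝ) s) (C := C * (1 + s))
      (fun x hx => (hWD x (hsub hx)).mono hsub)
      (fun x hx => by
        calc ‖Wder W x‖ ≤ C * (1 + x) := h2 x (hsub hx)
          _ ≤ C * (1 + s) := by nlinarith [hx.2, hC0])
      (convex_Icc _ _) (left_mem_Icc.2 hs.1) (right_mem_Icc.2 hs.1)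
    rw [hW.zero_neg, sub_zero] at this
    calc W s ≤ |W s| := le_abs_self _
      _ ≤ C * (1 + s) * ‖s - (-1)‖ := this
      _ = C * (1 + s)^2 := by
          rw [Real.norm_eq_abs, abs_of_nonneg (by linarith [hs.1])]; ring

end Profile

namespace Profile
variable {W : ℝ → ℝ} (hW : DoubleWell W)
include hW

lemma FW_lower {C : ℝ} (hC : 0 < C) {u v : ℝ} (huv : W v ≤ C * u ^ 2) (hu : 0 < u)
    (hv : v ∈ Ioo (-1:ℝ) 1) : (Real.sqrt (2 * C) * u)⁻¹ ≤ FW W v := by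
  have hWv := hW.pos v hv
  have ha : 0 < Real.sqrt (2 * W v) := Real.sqrt_pos.2 (by linarith)
  have hb : Real.sqrt (2 * W v) ≤ Real.sqrt (2 * C) * u := by
    rw [← Real.sqrt_sq hu.le, ← Real.sqrt_mul (by positivity)]
    exact Real.sqrt_le_sqrt (by nlinarith)
  exact inv_anti₀ ha hb

lemma tendsto_top : Tendsto (HI W) (𝓝[<] (1:ℝ)) atTop := by
  obtain ⟨C, hC0, hb1, _⟩ := exists_bound hW
  set c := (Real.sqrt (2 * C))⁻¹ with hc
  have hc0 : 0 < c := inv_pos.2 (Real.sqrt_pos.2 (by linarith))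
  have hφ : Tendsto (fun s : ℝ => -(c * Real.log (1 - s))) (𝓝[<] (1:ℝ)) atTop := by
    have h1 : Tendsto (fun s : ℝ => 1 - s) (𝓝[<] (1:ℝ)) (𝓝[>] (0:ℝ)) := by
      apply tendsto_nhdsWithin_of_tendsto_nhds_of_eventually_within
      · have : Tendsto (fun s : ℝ => 1 - s) (𝓝 (1:ℝ)) (𝓝 (1 - 1)) :=
          (continuous_const.sub continuous_id).tendsto 1
        simpa using this.mono_left nhdsWithin_le_nhds
      · filter_upwards [self_mem_nhdsWithin] with s hs
        exact sub_pos.2 (mem_Iio.1 hs)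
    have h2 := Real.tendsto_log_nhdsGT_zero.comp h1
    have h3 : Tendsto (fun s : ℝ => c * Real.log (1 - s)) (𝓝[<] (1:ℝ)) atBot :=
      Tendsto.const_mul_atBot hc0 h2
    exact tendsto_neg_atBot_atTop.comp h3
  apply tendsto_atTop_mono' _ _ hφ
  have hIoo : Ioo (0:ℝ) 1 ∈ 𝓝[<] (1:ℝ) := Ioo_mem_nhdsLT_of_mem (by norm_num)
  filter_upwards [hIoo] with s hs
  have hsI : s ∈ Ioo (-1:ℝ) 1 := ⟨by linarith [hs.1], hs.2⟩
  set g : ℝ → ℝ := fun ξ => (Real.sqrt (2 * C) * (1 - ξ))⁻¹ with hg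
  have hgG : ∀ ξ ∈ uIcc (0:ℝ) s, HasDerivAt (fun ξ : ℝ => -(c * Real.log (1 - ξ))) (g ξ) ξ := by
    intro ξ hξ
    rw [uIcc_of_le hs.1.le] at hξ
    have hξ1 : (1:ℝ) - ξ ≠ 0 := by
      have := hξ.2; have := hs.2; intro h; nlinarith
    have hlog : HasDerivAt (fun ξ : ℝ => Real.log (1 - ξ)) ((-1) / (1 - ξ)) ξ :=
      (((hasDerivAt_id ξ).const_sub 1)).log hξ1
    have := ((hlog.const_mul c).neg)
    refine this.congr_deriv ?_
    rw [hg, hc]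
    field_simp
  have hgc : ContinuousOn g (uIcc (0:ℝ) s) := by
    rw [uIcc_of_le hs.1.le]
    apply ContinuousOn.inv₀
    · exact (continuous_const.mul (continuous_const.sub continuous_id)).continuousOn
    · intro ξ hξ
      have : (0:ℝ) < 1 - ξ := by have := hξ.2; have := hs.2; linarith
      positivity
  have hgint : IntervalIntegrable g volume 0 s := hgc.intervalIntegrable
  have key : ∫ ξ in (0:ℝ)..s, g ξ ≤ HI W s := by
    apply intervalIntegral.integral_mono_on hs.1.le hgint (integrableFW hW zero_mem' hsI)
    intro ξ hξ
    have hξI : ξ ∈ Ioo (-1:ℝ) 1 := ⟨by linarith [hξ.1], lt_of_le_of_lt hξ.2 hs.2⟩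
    exact FW_lower hW hC0 (hb1 ξ (Ioo_subset_Icc_self hξI)) (by linarith [hξ.2, hs.2]) hξI
  have hval : ∫ ξ in (0:ℝ)..s, g ξ = -(c * Real.log (1 - s)) := by
    rw [intervalIntegral.integral_eq_sub_of_hasDerivAt hgG hgint]
    simp
  linarith [key, hval.symm.le]

lemma tendsto_bot : Tendsto (HI W) (𝓝[>] (-1:ℝ)) atBot := by
  obtain ⟨C, hC0, _, hb2⟩ := exists_bound hW
  set c := (Real.sqrt (2 * C))⁻¹ with hc
  have hc0 : 0 < c := inv_pos.2 (Real.sqrt_pos.2 (by linarith))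
  have hφ : Tendsto (fun s : ℝ => c * Real.log (1 + s)) (𝓝[>] (-1:ℝ)) atBot := by
    have h1 : Tendsto (fun s : ℝ => 1 + s) (𝓝[>] (-1:ℝ)) (𝓝[>] (0:ℝ)) := by
      apply tendsto_nhdsWithin_of_tendsto_nhds_of_eventually_within
      · have : Tendsto (fun s : ℝ => 1 + s) (𝓝 (-1:ℝ)) (𝓝 (1 + -1)) :=
          (continuous_const.add continuous_id).tendsto (-1)
        simpa using this.mono_left nhdsWithin_le_nhds
      · filter_upwards [self_mem_nhdsWithin] with s hs
        simpa using by linarith [mem_Ioi.1 hs]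
    exact Tendsto.const_mul_atBot hc0 (Real.tendsto_log_nhdsGT_zero.comp h1)
  apply tendsto_atBot_mono' _ _ hφ
  have hIoo : Ioo (-1:ℝ) 0 ∈ 𝓝[>] (-1:ℝ) := Ioo_mem_nhdsGT_of_mem (by norm_num)
  filter_upwards [hIoo] with s hs
  have hsI : s ∈ Ioo (-1:ℝ) 1 := ⟨hs.1, by linarith [hs.2]⟩
  set g : ℝ → ℝ := fun ξ => (Real.sqrt (2 * C) * (1 + ξ))⁻¹ with hg
  have hgG : ∀ ξ ∈ uIcc (0:ℝ) s, HasDerivAt (fun ξ : ℝ => c * Real.log (1 + ξ)) (g ξ) ξ := by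
    intro ξ hξ
    rw [uIcc_of_ge hs.2.le] at hξ
    have hξ1 : (1:ℝ) + ξ ≠ 0 := by
      have := hξ.1; have := hs.1; intro h; nlinarith
    have hlog : HasDerivAt (fun ξ : ℝ => Real.log (1 + ξ)) (1 / (1 + ξ)) ξ :=
      ((hasDerivAt_id ξ).const_add 1).log hξ1
    have := hlog.const_mul c
    refine this.congr_deriv ?_
    rw [hg, hc]
    field_simp
  have hgc : ContinuousOn g (uIcc (0:ℝ) s) := by
    rw [uIcc_of_ge hs.2.le]
    apply ContinuousOn.inv₀
    · exact (continuous_const.mul (continuous_const.add continuous_id)).continuousOn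
    · intro ξ hξ
      have : (0:ℝ) < 1 + ξ := by have := hξ.1; have := hs.1; linarith
      positivity
  have hgint : IntervalIntegrable g volume 0 s := hgc.intervalIntegrable
  have key : HI W s ≤ ∫ ξ in (0:ℝ)..s, g ξ := by
    have hmono : ∫ ξ in s..(0:ℝ), g ξ ≤ ∫ ξ in s..(0:ℝ), FW W ξ := by
      apply intervalIntegral.integral_mono_on (by linarith [hs.2]) hgint.symm
        (integrableFW hW hsI zero_mem')
      intro ξ hξ
      have hξI : ξ ∈ Ioo (-1:ℝ) 1 := ⟨lt_of_lt_of_le hs.1 hξ.1, by linarith [hξ.2]⟩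
      exact FW_lower hW hC0 (hb2 ξ (Ioo_subset_Icc_self hξI)) (by linarith [hξ.1, hs.1]) hξI
    have e1 : HI W s = -∫ ξ in s..(0:ℝ), FW W ξ := intervalIntegral.integral_symm _ _
    have e2 : ∫ ξ in (0:ℝ)..s, g ξ = -∫ ξ in s..(0:ℝ), g ξ := intervalIntegral.integral_symm _ _
    rw [e1, e2]
    linarith
  have hval : ∫ ξ in (0:ℝ)..s, g ξ = c * Real.log (1 + s) := by
    rw [intervalIntegral.integral_eq_sub_of_hasDerivAt hgG hgint]
    simp
  linarith [key, hval.le]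

end Profile

namespace Profile
variable {W : ℝ → ℝ} (hW : DoubleWell W)
include hW

lemma surjHI : SurjOn (HI W) (Ioo (-1:ℝ) 1) univ := by
  intro t _
  have hb := ((tendsto_top hW).eventually_ge_atTop t).and
    (eventually_of_mem (Ioo_mem_nhdsLT_of_mem (by norm_num : (1:ℝ) ∈ Ioc (-1:ℝ) 1))
      (fun x h => h))
  obtain ⟨b, hbt, hbI⟩ := hb.exists
  have ha := ((tendsto_bot hW).eventually_le_atBot t).and
    (eventually_of_mem (Ioo_mem_nhdsGT_of_mem (by norm_num : (-1:ℝ) ∈ Ico (-1:ℝ) 1))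
      (fun x h => h))
  obtain ⟨a, hat, haI⟩ := ha.exists
  rcases le_total a b with hab | hab
  · have hsub : Icc a b ⊆ Ioo (-1:ℝ) 1 := ordConnected_Ioo.out haI hbI
    have hcont : ContinuousOn (HI W) (Icc a b) := fun x hx =>
      ((hasDerivAtHI hW (hsub hx)).continuousAt).continuousWithinAt
    obtain ⟨x, hx, hxt⟩ := intermediate_value_Icc hab hcont ⟨hat, hbt⟩
    exact ⟨x, hsub hx, hxt⟩
  · have hm : HI W b ≤ HI W a := (strictMonoHI hW).monotoneOn hbI haI hab
    exact ⟨a, haI, le_antisymm hat (le_trans hbt hm)⟩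

lemma bijHI : BijOn (HI W) (Ioo (-1:ℝ) 1) univ :=
  ⟨fun _ _ => mem_univ _, (strictMonoHI hW).injOn, surjHI hW⟩

def g0 (W : ℝ → ℝ) : ℝ → ℝ := Function.invFunOn (HI W) (Ioo (-1) 1)

lemma g0_mem (t : ℝ) : g0 W t ∈ Ioo (-1:ℝ) 1 :=
  Function.invFunOn_mem (surjHI hW (mem_univ t))

lemma g0_right (t : ℝ) : HI W (g0 W t) = t :=
  Function.invFunOn_eq (surjHI hW (mem_univ t))

lemma g0_left {s : ℝ} (hs : s ∈ Ioo (-1:ℝ) 1) : g0 W (HI W s) = s :=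
  (strictMonoHI hW).injOn (g0_mem hW _) hs (g0_right hW _)

lemma g0_strictMono : StrictMono (g0 W) := by
  intro t₁ t₂ h
  by_contra hc
  push_neg at hc
  have := (strictMonoHI hW).monotoneOn (g0_mem hW t₂) (g0_mem hW t₁) hc
  rw [g0_right hW, g0_right hW] at this
  linarith

lemma g0_range : range (g0 W) = Ioo (-1:ℝ) 1 := by
  apply subset_antisymm
  · rintro _ ⟨t, rfl⟩; exact g0_mem hW t
  · intro s hs; exact ⟨HI W s, g0_left hW hs⟩

lemma g0_continuous : Continuous (g0 W) := by
  rw [continuous_iff_continuousAt]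
  intro t
  apply StrictMonoOn.continuousAt_of_image_mem_nhds ((g0_strictMono hW).strictMonoOn univ)
    univ_mem
  rw [image_univ, g0_range hW]
  exact isOpen_Ioo.mem_nhds (g0_mem hW t)

lemma sqrt_pos_at (t : ℝ) : 0 < Real.sqrt (2 * W (g0 W t)) :=
  Real.sqrt_pos.2 (by linarith [hW.pos _ (g0_mem hW t)])

lemma g0_hasDeriv (t : ℝ) : HasDerivAt (g0 W) (Real.sqrt (2 * W (g0 W t))) t := by
  have h := HasDerivAt.of_local_left_inverse ((g0_continuous hW).continuousAt)
    (hasDerivAtHI hW (g0_mem hW t)) (ne_of_gt (FW_pos hW (g0_mem hW t)))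
    (Eventually.of_forall (g0_right hW))
  rwa [FW, inv_inv] at h

lemma g0_deriv (t : ℝ) : deriv (g0 W) t = Real.sqrt (2 * W (g0 W t)) :=
  (g0_hasDeriv hW t).deriv

lemma hasDerivW {x : ℝ} (hx : x ∈ Ioo (-1:ℝ) 1) : HasDerivAt W (Wder W x) x := by
  have hnb : Icc (-1:ℝ) 1 ∈ 𝓝 x := Icc_mem_nhds hx.1 hx.2
  have hd : DifferentiableAt ℝ W x :=
    ((hW.smooth.differentiableOn (by norm_num)) x (Ioo_subset_Icc_self hx)).differentiableAt hnb
  have : Wder W x = deriv W x := derivWithin_of_mem_nhds hnb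
  rw [this]
  exact hd.hasDerivAt

lemma g0_deriv2_hasDeriv (t : ℝ) :
    HasDerivAt (fun t => Real.sqrt (2 * W (g0 W t))) (Wder W (g0 W t)) t := by
  have h1 : HasDerivAt (fun t => 2 * W (g0 W t))
      (2 * (Wder W (g0 W t) * Real.sqrt (2 * W (g0 W t)))) t :=
    (((hasDerivW hW (g0_mem hW t)).comp t (g0_hasDeriv hW t))).const_mul 2
  have hne : 2 * W (g0 W t) ≠ 0 := by
    have := hW.pos _ (g0_mem hW t); positivity
  have h2 := (Real.hasDerivAt_sqrt hne).comp t h1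
  have hs := sqrt_pos_at hW t
  set A := Real.sqrt (2 * W (g0 W t)) with hA
  refine h2.congr_deriv ?_
  field_simp

lemma g0_deriv_deriv : deriv (deriv (g0 W)) = fun t => Wder W (g0 W t) := by
  funext t
  have : deriv (g0 W) = fun t => Real.sqrt (2 * W (g0 W t)) := funext (g0_deriv hW)
  rw [this]
  exact (g0_deriv2_hasDeriv hW t).deriv

lemma g0_contDiff : ContDiff ℝ 2 (g0 W) := by
  have hd : deriv (g0 W) = fun t => Real.sqrt (2 * W (g0 W t)) := funext (g0_deriv hW)
  rw [show ((2:WithTop ℕ∞)) = 1 + 1 by norm_num, contDiff_succ_iff_deriv]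
  refine ⟨fun t => (g0_hasDeriv hW t).differentiableAt, by simp, ?_⟩
  rw [hd, show ((1:WithTop ℕ∞)) = 0 + 1 by norm_num, contDiff_succ_iff_deriv]
  refine ⟨fun t => (g0_deriv2_hasDeriv hW t).differentiableAt, by simp, ?_⟩
  rw [contDiff_zero]
  have h2 : deriv (fun t => Real.sqrt (2 * W (g0 W t))) = fun t => Wder W (g0 W t) :=
    funext fun t => (g0_deriv2_hasDeriv hW t).deriv
  rw [h2]
  exact (contWder hW).comp_continuous (g0_continuous hW)
    (fun t => Ioo_subset_Icc_self (g0_mem hW t))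

lemma g0_tendsto_top : Tendsto (g0 W) atTop (𝓝 1) := by
  have h := tendsto_atTop_ciSup (g0_strictMono hW).monotone
    (by rw [g0_range hW]; exact bddAbove_Ioo)
  have : ⨆ t, g0 W t = 1 := by
    rw [← sSup_range, g0_range hW, csSup_Ioo (by norm_num : (-1:ℝ) < 1)]
  rwa [this] at h

lemma g0_tendsto_bot : Tendsto (g0 W) atBot (𝓝 (-1)) := by
  have h := tendsto_atBot_ciInf (g0_strictMono hW).monotone
    (by rw [g0_range hW]; exact bddBelow_Ioo)
  have : ⨅ t, g0 W t = -1 := by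
    rw [← sInf_range, g0_range hW, csInf_Ioo (by norm_num : (-1:ℝ) < 1)]
  rwa [this] at h

end Profile

/-- **Properties of `H₀` and of the one-dimensional profile `g₀ = H₀⁻¹`.**
`H₀(s) = ∫₀^s (2W(ξ))^{-1/2} dξ` is well defined and strictly increasing on `(-1,1)` and is a
bijection from `(-1,1)` onto `ℝ`; its inverse `g₀` takes values in `(-1,1)`, is `C²`,
satisfies `g₀(0) = 0`, `g₀'(t) = √(2W(g₀(t))) > 0`, `g₀''(t) = W'(g₀(t))`, and
`g₀(t) → ±1` as `t → ±∞`. -/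
theorem one_dimensional_profile_properties (W : ℝ → ℝ) (hW : DoubleWell W) :
    (∀ s ∈ Set.Ioo (-1 : ℝ) 1,
      IntervalIntegrable (fun ξ => (Real.sqrt (2 * W ξ))⁻¹) volume 0 s) ∧
    StrictMonoOn (fun s => ∫ ξ in (0 : ℝ)..s, (Real.sqrt (2 * W ξ))⁻¹)
      (Set.Ioo (-1 : ℝ) 1) ∧
    Set.BijOn (fun s => ∫ ξ in (0 : ℝ)..s, (Real.sqrt (2 * W ξ))⁻¹)
      (Set.Ioo (-1 : ℝ) 1) Set.univ ∧
    ∃ g₀ : ℝ → ℝ,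
      (∀ t : ℝ, g₀ t ∈ Set.Ioo (-1 : ℝ) 1) ∧
      (∀ t : ℝ, (∫ ξ in (0 : ℝ)..(g₀ t), (Real.sqrt (2 * W ξ))⁻¹) = t) ∧
      (∀ s ∈ Set.Ioo (-1 : ℝ) 1, g₀ (∫ ξ in (0 : ℝ)..s, (Real.sqrt (2 * W ξ))⁻¹) = s) ∧
      ContDiff ℝ 2 g₀ ∧ g₀ 0 = 0 ∧
      (∀ t : ℝ, deriv g₀ t = Real.sqrt (2 * W (g₀ t)) ∧ 0 < deriv g₀ t) ∧
      (∀ t : ℝ, deriv (deriv g₀) t = Wder W (g₀ t)) ∧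
      Tendsto g₀ atTop (𝓝 1) ∧ Tendsto g₀ atBot (𝓝 (-1)) := by
  refine ⟨fun s hs => Profile.integrableFW hW Profile.zero_mem' hs,
    Profile.strictMonoHI hW, Profile.bijHI hW, Profile.g0 W,
    Profile.g0_mem hW, Profile.g0_right hW, fun s hs => Profile.g0_left hW hs,
    Profile.g0_contDiff hW, ?_,
    fun t => ⟨Profile.g0_deriv hW t, by
      rw [Profile.g0_deriv hW t]; exact Profile.sqrt_pos_at hW t⟩,
    fun t => congrFun (Profile.g0_deriv_deriv hW) t,
    Profile.g0_tendsto_top hW, Profile.g0_tendsto_bot hW⟩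
  have h0 : Profile.HI W 0 = 0 := intervalIntegral.integral_same
  conv_lhs => rw [← h0]
  exact Profile.g0_left hW Profile.zero_mem'
end
end

section
/- g₀ is the unique strictly increasing heteroclinic solution normalized at the origin: if h ∈ C²(ℝ) is strictly increasing with h(0) = 0, h''(t) = W'(h(t)) for all t ∈ ℝ, and lim_{t→±∞} h(t) = ±1, then h(t) = g₀(t) for all t ∈ ℝ. -/
open MeasureTheory Filter Topology Set

noncomputable section

/-- **Uniqueness of the normalized strictly increasing heteroclinic.** If `h ∈ C²(ℝ)` is
strictly increasing with `h(0) = 0`, solves `h'' = W'(h)` and `h(t) → ±1` as `t → ±∞`,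
then `h = g₀`, where `g₀` is the inverse of `H₀(s) = ∫₀^s (2W(ξ))^{-1/2} dξ`. -/
theorem heteroclinic_uniqueness (W : ℝ → ℝ) (hW : DoubleWell W)
    (g₀ : ℝ → ℝ) (hg₀_mem : ∀ t : ℝ, g₀ t ∈ Set.Ioo (-1 : ℝ) 1)
    (hg₀_inv : ∀ t : ℝ, (∫ ξ in (0 : ℝ)..(g₀ t), (Real.sqrt (2 * W ξ))⁻¹) = t)
    (h : ℝ → ℝ) (hh_C2 : ContDiff ℝ 2 h) (hh_mono : StrictMono h) (hh0 : h 0 = 0)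
    (hh_ode : ∀ t : ℝ, deriv (deriv h) t = Wder W (h t))
    (hh_top : Tendsto h atTop (𝓝 1)) (hh_bot : Tendsto h atBot (𝓝 (-1))) :
    ∀ t : ℝ, h t = g₀ t := by
  have hWcont : ContinuousOn W (Icc (-1) 1) := hW.smooth.continuousOn
  have hle : ∀ t, h t ≤ 1 := fun t => hh_mono.monotone.ge_of_tendsto hh_top t
  have hge : ∀ t, -1 ≤ h t := fun t => hh_mono.monotone.le_of_tendsto hh_bot t
  have hmem : ∀ t, h t ∈ Ioo (-1:ℝ) 1 := by
    intro t
    constructor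
    · exact lt_of_le_of_lt (hge (t-1)) (hh_mono (by linarith))
    · exact lt_of_lt_of_le (hh_mono (lt_add_one t)) (hle (t+1))
  have hIccnhds : ∀ t, Icc (-1:ℝ) 1 ∈ 𝓝 (h t) :=
    fun t => Icc_mem_nhds (hmem t).1 (hmem t).2
  have hd1 : Differentiable ℝ h := hh_C2.differentiable (by norm_num)
  have hd2 : Differentiable ℝ (deriv h) := by
    have h2 : ContDiff ℝ ((1:ℕ∞)+1) h := by exact_mod_cast hh_C2
    exact (contDiff_succ_iff_deriv.mp h2).2.2.differentiable (by norm_num)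
  -- W has derivative Wder W (h t) at h t
  have hWd : ∀ t, HasDerivAt W (Wder W (h t)) (h t) := by
    intro t
    have h1 : DifferentiableWithinAt ℝ W (Icc (-1) 1) (h t) :=
      (hW.smooth.differentiableOn (by norm_num)) _ (Ioo_subset_Icc_self (hmem t))
    have h2 : DifferentiableAt ℝ W (h t) := h1.differentiableAt (hIccnhds t)
    have h3 : Wder W (h t) = deriv W (h t) := derivWithin_of_mem_nhds (hIccnhds t)
    rw [h3]
    exact h2.hasDerivAt
  -- energy
  set E : ℝ → ℝ := fun t => (deriv h t)^2 - 2 * W (h t) with hEdef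
  have hEd : ∀ t, HasDerivAt E 0 t := by
    intro t
    have h1 : HasDerivAt h (deriv h t) t := (hd1 t).hasDerivAt
    have h2 : HasDerivAt (deriv h) (deriv (deriv h) t) t := (hd2 t).hasDerivAt
    have h3 : HasDerivAt (fun u => (deriv h u)^2)
        (2 * deriv h t ^ 1 * deriv (deriv h) t) t := h2.pow 2
    have h4 : HasDerivAt (fun u => W (h u)) (Wder W (h t) * deriv h t) t :=
      (hWd t).comp t h1
    have h5 := h3.sub (h4.const_mul 2)
    refine h5.congr_deriv ?_
    rw [hh_ode t]; ring
  have hEconst : ∀ t, E t = E 0 :=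
    fun t => is_const_of_deriv_eq_zero (fun x => (hEd x).differentiableAt)
      (fun x => (hEd x).deriv) t 0
  -- deriv h nonneg
  have hd_nonneg : ∀ t, 0 ≤ deriv h t := by
    intro t
    have h1 : HasDerivAt h (deriv h t) t := (hd1 t).hasDerivAt
    have h2 := hasDerivAt_iff_tendsto_slope.mp h1
    refine ge_of_tendsto h2 ?_
    filter_upwards [self_mem_nhdsWithin] with y hy
    rcases lt_or_gt_of_ne (hy : y ≠ t) with hlt | hgt
    · rw [slope_def_field]
      exact div_nonneg_iff.mpr (Or.inr ⟨by linarith [(hh_mono hlt).le], by linarith⟩)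
    · rw [slope_def_field]
      exact div_nonneg (by linarith [(hh_mono hgt).le]) (by linarith)
  -- W (h t) → 0 at top
  have hWlim : Tendsto (fun t => W (h t)) atTop (𝓝 0) := by
    have hc : ContinuousWithinAt W (Icc (-1) 1) 1 := hWcont 1 (by norm_num)
    have h1 : Tendsto h atTop (𝓝[Icc (-1:ℝ) 1] 1) :=
      tendsto_nhdsWithin_iff.mpr ⟨hh_top, Eventually.of_forall
        (fun t => Ioo_subset_Icc_self (hmem t))⟩
    have := hc.tendsto.comp h1
    simpa [hW.zero_pos, Function.comp_def] using this
  -- (deriv h)^2 → E 0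
  have hsq : Tendsto (fun t => (deriv h t)^2) atTop (𝓝 (E 0)) := by
    have : ∀ t, (deriv h t)^2 = E 0 + 2 * W (h t) := by
      intro t; have := hEconst t; simp only [hEdef] at this ⊢; linarith
    simp_rw [this]
    simpa using (tendsto_const_nhds.add (hWlim.const_mul 2))
  have hE0_nonneg : 0 ≤ E 0 := ge_of_tendsto hsq (Eventually.of_forall fun t => sq_nonneg _)
  have hE0_nonpos : ¬ (0 < E 0) := by
    intro hpos
    -- deriv h → √(E 0) > 0
    have hds : Tendsto (fun t => deriv h t) atTop (𝓝 (Real.sqrt (E 0))) := by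
      have h1 : Tendsto (fun t => Real.sqrt ((deriv h t)^2)) atTop (𝓝 (Real.sqrt (E 0))) :=
        (Real.continuous_sqrt.continuousAt).tendsto.comp hsq
      have h2 : ∀ t, Real.sqrt ((deriv h t)^2) = deriv h t :=
        fun t => Real.sqrt_sq (hd_nonneg t)
      simpa [h2] using h1
    set c := Real.sqrt (E 0) with hc
    have hcpos : 0 < c := Real.sqrt_pos.mpr hpos
    have hev : ∀ᶠ t in atTop, c/2 < deriv h t :=
      hds.eventually (eventually_gt_nhds (by linarith))
    obtain ⟨T, hT⟩ := hev.exists_forall_of_atTop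
    -- h x ≥ h T + (c/2) (x - T) on [T, ∞)
    have hanti : AntitoneOn (fun x => c/2 * x - h x) (Ici T) := by
      apply antitoneOn_of_deriv_nonpos (convex_Ici T)
      · exact (continuous_const.mul continuous_id).continuousOn.sub hd1.continuous.continuousOn
      · intro x hx
        exact ((differentiable_const _ |>.mul differentiable_id).sub hd1).differentiableOn x hx
      · intro x hx
        rw [interior_Ici] at hx
        have hder : HasDerivAt (fun x => c/2 * x - h x) (c/2 - deriv h x) x := by
          exact (((hasDerivAt_id x).const_mul (c/2)).sub (hd1 x).hasDerivAt).congr_deriv (by ring)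
        rw [hder.deriv]
        have := hT x (le_of_lt hx)
        linarith
    have hnn : 0 ≤ (2/c) * (2 - h T) := by
      apply mul_nonneg (by positivity)
      have := hle T; linarith
    have hxT : T ≤ T + (2/c) * (2 - h T) := by linarith
    have this2 := hanti (mem_Ici.mpr le_rfl) (mem_Ici.mpr hxT) hxT
    simp only at this2
    have h3 : c/2 * (T + (2/c) * (2 - h T)) = c/2*T + (2 - h T) := by
      field_simp
    rw [h3] at this2
    have hx1 : h (T + (2/c) * (2 - h T)) ≤ 1 := hle _
    linarith
  have hE0 : E 0 = 0 := le_antisymm (not_lt.mp hE0_nonpos) hE0_nonneg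
  -- deriv h t = sqrt (2 W (h t))
  have hkey : ∀ t, deriv h t = Real.sqrt (2 * W (h t)) := by
    intro t
    have h1 : (deriv h t)^2 = 2 * W (h t) := by
      have := hEconst t; rw [hE0] at this
      simp only [hEdef] at this; linarith
    rw [← h1, Real.sqrt_sq (hd_nonneg t)]
  -- integrand
  set f : ℝ → ℝ := fun ξ => (Real.sqrt (2 * W ξ))⁻¹ with hfdef
  have hfcont : ContinuousOn f (Ioo (-1:ℝ) 1) := by
    apply ContinuousOn.inv₀
    · exact Real.continuous_sqrt.comp_continuousOn
        (continuousOn_const.mul (hWcont.mono Ioo_subset_Icc_self))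
    · intro x hx
      exact ne_of_gt (Real.sqrt_pos.mpr (by have := hW.pos x hx; linarith))
  have hfpos : ∀ x ∈ Ioo (-1:ℝ) 1, 0 < f x := by
    intro x hx
    exact inv_pos.mpr (Real.sqrt_pos.mpr (by have := hW.pos x hx; linarith))
  have h0mem : (0:ℝ) ∈ Ioo (-1:ℝ) 1 := by norm_num
  have husub : ∀ y ∈ Ioo (-1:ℝ) 1, uIcc (0:ℝ) y ⊆ Ioo (-1:ℝ) 1 :=
    fun y hy => (ordConnected_Ioo).uIcc_subset h0mem hy
  have hint : ∀ y ∈ Ioo (-1:ℝ) 1, IntervalIntegrable f volume 0 y :=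
    fun y hy => (hfcont.mono (husub y hy)).intervalIntegrable
  -- FTC
  have hFd : ∀ t, HasDerivAt (fun u => ∫ ξ in (0:ℝ)..(h u), f ξ) 1 t := by
    intro t
    have h1 : HasDerivAt (fun y => ∫ ξ in (0:ℝ)..y, f ξ) (f (h t)) (h t) := by
      apply intervalIntegral.integral_hasDerivAt_right (hint _ (hmem t))
      · exact hfcont.stronglyMeasurableAtFilter isOpen_Ioo _ (hmem t)
      · exact (hfcont (h t) (hmem t)).continuousAt (isOpen_Ioo.mem_nhds (hmem t))
    have h2 := h1.comp t (hd1 t).hasDerivAt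
    have h3 : f (h t) * deriv h t = 1 := by
      rw [hkey t, hfdef]
      exact inv_mul_cancel₀ (ne_of_gt (Real.sqrt_pos.mpr
        (by have := hW.pos _ (hmem t); linarith)))
    rwa [h3] at h2
  have hFt : ∀ t, (∫ ξ in (0:ℝ)..(h t), f ξ) = t := by
    have hG : ∀ t, HasDerivAt (fun u => (∫ ξ in (0:ℝ)..(h u), f ξ) - u) 0 t := by
      intro t
      exact ((hFd t).sub (hasDerivAt_id t)).congr_deriv (by ring)
    have hGconst : ∀ t, (∫ ξ in (0:ℝ)..(h t), f ξ) - t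
        = (∫ ξ in (0:ℝ)..(h 0), f ξ) - 0 :=
      fun t => is_const_of_deriv_eq_zero (fun x => (hG x).differentiableAt)
        (fun x => (hG x).deriv) t 0
    intro t
    have := hGconst t
    rw [hh0, intervalIntegral.integral_same] at this
    linarith
  -- strict monotonicity of y ↦ ∫ 0..y f on Ioo
  have hmono : ∀ a b : ℝ, a ∈ Ioo (-1:ℝ) 1 → b ∈ Ioo (-1:ℝ) 1 → a < b →
      (∫ ξ in (0:ℝ)..a, f ξ) < ∫ ξ in (0:ℝ)..b, f ξ := by
    intro a b ha hb hab
    have habsub : uIcc a b ⊆ Ioo (-1:ℝ) 1 := (ordConnected_Ioo).uIcc_subset ha hb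
    have hiab : IntervalIntegrable f volume a b := (hfcont.mono habsub).intervalIntegrable
    have hadd := intervalIntegral.integral_add_adjacent_intervals (hint a ha) hiab
    have hpos : 0 < ∫ ξ in a..b, f ξ := by
      apply intervalIntegral.intervalIntegral_pos_of_pos_on hiab _ hab
      intro x hx
      exact hfpos x ⟨lt_trans ha.1 hx.1, lt_trans hx.2 hb.2⟩
    linarith [hadd]
  intro t
  rcases lt_trichotomy (h t) (g₀ t) with hlt | heq | hgt
  · exfalso
    have := hmono _ _ (hmem t) (hg₀_mem t) hlt
    rw [hFt t] at this
    have h2 := hg₀_inv t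
    simp only [hfdef] at this
    linarith
  · exact heq
  · exfalso
    have := hmono _ _ (hg₀_mem t) (hmem t) hgt
    rw [hFt t] at this
    have h2 := hg₀_inv t
    simp only [hfdef] at this
    linarith
end
end
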